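/- arXiv:2102.12560 — 6 statements merged into one kernel-verified Lean document; each statement's English description precedes it below -/
import Mathlib

section
/- Let A be a finite nonempty type and let x, y : A → ℝ. Then the softmax of x equals the softmax of y (i.e., for every a ∈ A, exp(x a) / ∑_{b∈A} exp(x b) = exp(y a) / ∑_{b∈A} exp(y b)) if and only if there exists a constant c ∈ ℝ such that x a = y a + c for all a ∈ A. -/
/-!
Adding `c` multiplies every weight and the normaliser by `exp c`. Conversely, equal softmax
values give `exp (x a) = exp (y a) * (∑ exp x / ∑ exp y)`, so taking logarithms yields the
constant `c = log (∑ exp x / ∑ exp y)`.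
-/

open Real Finset

lemma sum_exp_add_const {ι : Type*} (s : Finset ι) (y : ι → ℝ) (c : ℝ) :
    ∑ b ∈ s, exp (y b + c) = (∑ b ∈ s, exp (y b)) * exp c := by
  simp only [exp_add, sum_mul]

lemma eq_add_log_div_of_exp_div_eq {u v p q : ℝ} (hp : 0 < p) (hq : 0 < q)
    (h : exp u / p = exp v / q) : u = v + log (p / q) := by
  have hexp : exp u = exp v * (p / q) := by
    rw [div_eq_div_iff hp.ne' hq.ne'] at h
    field_simp
    linarith
  rw [← log_exp u, hexp, log_mul (exp_pos v).ne' (div_pos hp hq).ne', log_exp]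

/-- Softmax identifiability: two functions on a finite nonempty type have the same
softmax iff they differ by an additive constant. -/
theorem softmax_eq_iff_exists_const {A : Type*} [Fintype A] [Nonempty A] (x y : A → ℝ) :
    (∀ a : A, Real.exp (x a) / ∑ b : A, Real.exp (x b)
      = Real.exp (y a) / ∑ b : A, Real.exp (y b)) ↔
    ∃ c : ℝ, ∀ a : A, x a = y a + c := by
  have sum_exp_pos (z : A → ℝ) : 0 < ∑ b, exp (z b) :=
    sum_pos (fun b _ => exp_pos (z b)) univ_nonempty
  constructor
  · intro h
    exact ⟨_, fun a => eq_add_log_div_of_exp_div_eq (sum_exp_pos x) (sum_exp_pos y) (h a)⟩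
  · rintro ⟨c, hc⟩ a
    obtain rfl : x = fun b => y b + c := funext hc
    rw [sum_exp_add_const, exp_add, mul_div_mul_right _ _ (exp_pos c).ne']
end

section
/- Let A be a finite nonempty type, x : A → ℝ, and let p : A → ℝ be the softmax of x. Define the cross-entropy loss L(q) := −∑_{a∈A} p a · log( exp(q a) / ∑_{b∈A} exp(q b) ) for q : A → ℝ. Then q is a global minimiser of L (i.e., L(q) ≤ L(q') for all q' : A → ℝ) if and only if there exists a constant c ∈ ℝ such that q a = x a + c for all a ∈ A. -/
open Real Finset

/-- Gibbs' inequality with equality case. -/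
lemma gibbs_aux {A : Type*} [Fintype A] (P S : A → ℝ)
    (hP : ∀ a, 0 < P a) (hS : ∀ a, 0 < S a)
    (hsum : ∑ a, S a = ∑ a, P a) :
    (∑ a, P a * Real.log (S a) ≤ ∑ a, P a * Real.log (P a)) ∧
    ((∑ a, P a * Real.log (S a) = ∑ a, P a * Real.log (P a)) → ∀ a, S a = P a) := by
  have hfn : ∀ a, 0 ≤ (S a - P a) - P a * Real.log (S a / P a) := by
    intro a
    have h1 : Real.log (S a / P a) ≤ S a / P a - 1 :=
      Real.log_le_sub_one_of_pos (div_pos (hS a) (hP a))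
    have h2 : P a * Real.log (S a / P a) ≤ P a * (S a / P a - 1) :=
      mul_le_mul_of_nonneg_left h1 (hP a).le
    have h3 : P a * (S a / P a - 1) = S a - P a := by
      rw [mul_sub, mul_div_cancel₀ _ (hP a).ne', mul_one]
    nlinarith
  have hsplit : ∀ a, P a * Real.log (S a / P a)
      = P a * Real.log (S a) - P a * Real.log (P a) := by
    intro a
    rw [Real.log_div (hS a).ne' (hP a).ne']
    ring
  have hsumf : ∑ a, ((S a - P a) - P a * Real.log (S a / P a))
      = ∑ a, P a * Real.log (P a) - ∑ a, P a * Real.log (S a) := by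
    simp only [hsplit]
    rw [Finset.sum_sub_distrib, Finset.sum_sub_distrib, Finset.sum_sub_distrib, hsum]
    ring
  constructor
  · have : 0 ≤ ∑ a, ((S a - P a) - P a * Real.log (S a / P a)) :=
      Finset.sum_nonneg fun a _ => hfn a
    linarith [hsumf ▸ this]
  · intro heq a
    have hz : ∑ a ∈ Finset.univ, ((S a - P a) - P a * Real.log (S a / P a)) = 0 := by
      rw [hsumf, heq]; ring
    have hall := (Finset.sum_eq_zero_iff_of_nonneg (fun a _ => hfn a)).mp hz a (Finset.mem_univ a)
    by_contra hne
    have hdiv : S a / P a ≠ 1 := by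
      intro h
      exact hne ((div_eq_one_iff_eq (hP a).ne').mp h)
    have h1 : Real.log (S a / P a) < S a / P a - 1 :=
      Real.log_lt_sub_one_of_pos (div_pos (hS a) (hP a)) hdiv
    have h2 : P a * Real.log (S a / P a) < P a * (S a / P a - 1) :=
      mul_lt_mul_of_pos_left h1 (hP a)
    have h3 : P a * (S a / P a - 1) = S a - P a := by
      rw [mul_sub, mul_div_cancel₀ _ (hP a).ne', mul_one]
    nlinarith

/-- The cross-entropy loss with softmax target `p = softmax x` is globally minimised
exactly at the functions `q` that equal `x` up to an additive constant. -/
theorem crossEntropy_isMinOn_iff {A : Type*} [Fintype A] [Nonempty A]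
    (x : A → ℝ) (p : A → ℝ)
    (hp : ∀ a : A, p a = Real.exp (x a) / ∑ b : A, Real.exp (x b))
    (L : (A → ℝ) → ℝ)
    (hL : ∀ q : A → ℝ,
      L q = -∑ a : A, p a * Real.log (Real.exp (q a) / ∑ b : A, Real.exp (q b)))
    (q : A → ℝ) :
    (∀ q' : A → ℝ, L q ≤ L q') ↔ ∃ c : ℝ, ∀ a : A, q a = x a + c := by
  have hSpos : ∀ r : A → ℝ, 0 < ∑ b : A, Real.exp (r b) := fun r =>
    Finset.sum_pos (fun b _ => Real.exp_pos _) Finset.univ_nonempty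
  set σ : (A → ℝ) → A → ℝ := fun r a => Real.exp (r a) / ∑ b : A, Real.exp (r b) with hσ
  have hσpos : ∀ r a, 0 < σ r a := fun r a => div_pos (Real.exp_pos _) (hSpos r)
  have hσsum : ∀ r : A → ℝ, ∑ a, σ r a = 1 := by
    intro r
    show ∑ a, Real.exp (r a) / ∑ b : A, Real.exp (r b) = 1
    rw [← Finset.sum_div]
    exact div_self (hSpos r).ne'
  have hpσ : ∀ a, p a = σ x a := fun a => hp a
  have hppos : ∀ a, 0 < p a := fun a => (hpσ a) ▸ hσpos x a
  have hLr : ∀ r : A → ℝ, L r = -∑ a : A, p a * Real.log (σ r a) := hL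
  have hgibbs : ∀ r : A → ℝ, ∑ a, p a * Real.log (σ r a) ≤ ∑ a, p a * Real.log (p a) ∧
      ((∑ a, p a * Real.log (σ r a) = ∑ a, p a * Real.log (p a)) → ∀ a, σ r a = p a) := by
    intro r
    apply gibbs_aux p (σ r) hppos (hσpos r)
    rw [hσsum r]
    rw [show (∑ a, p a) = ∑ a, σ x a from Finset.sum_congr rfl fun a _ => hpσ a, hσsum x]
  have hLxval : L x = -∑ a : A, p a * Real.log (p a) := by
    rw [hLr]
    congr 1
    exact Finset.sum_congr rfl fun a _ => by rw [← hpσ a]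
  have hmin : ∀ r : A → ℝ, L x ≤ L r := by
    intro r
    rw [hLxval, hLr]
    linarith [(hgibbs r).1]
  constructor
  · intro hq
    have heq : L q = L x := le_antisymm (hq x) (hmin q)
    have hσeq : ∀ a, σ q a = p a := by
      apply (hgibbs q).2
      have h1 := hLr q
      rw [heq, hLxval] at h1
      linarith
    refine ⟨Real.log ((∑ b : A, Real.exp (q b)) / ∑ b : A, Real.exp (x b)), fun a => ?_⟩
    have h := hσeq a
    rw [hp a] at h
    have h' : Real.exp (q a) / ∑ b : A, Real.exp (q b)
        = Real.exp (x a) / ∑ b : A, Real.exp (x b) := h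
    rw [div_eq_div_iff (hSpos q).ne' (hSpos x).ne'] at h'
    have hx : Real.exp (q a) = Real.exp (x a) *
        ((∑ b : A, Real.exp (q b)) / ∑ b : A, Real.exp (x b)) := by
      rw [mul_div_assoc', ← h', mul_div_assoc, div_self (hSpos x).ne', mul_one]
    have := congrArg Real.log hx
    rw [Real.log_exp, Real.log_mul (Real.exp_pos _).ne'
      (div_pos (hSpos q) (hSpos x)).ne', Real.log_exp] at this
    exact this
  · rintro ⟨c, hc⟩ q'
    have hσq : σ q = σ x := by
      funext a
      show Real.exp (q a) / ∑ b : A, Real.exp (q b)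
        = Real.exp (x a) / ∑ b : A, Real.exp (x b)
      simp only [hc, Real.exp_add, ← Finset.sum_mul]
      rw [mul_div_mul_right _ _ (Real.exp_pos c).ne']
    calc L q = L x := by rw [hLr, hLr, hσq]
    _ ≤ L q' := hmin q'
end

section
/- Let S and A be finite nonempty types, ν > 0 a real number, and γ ∈ ℝ. Let Q_e : S × A → ℝ (the expert's action-value function) and let T : S × A → S × A (mapping each state-action pair to the successor state-action pair observed in the demonstrations). Suppose Q : S × A → ℝ satisfies, for every s ∈ S and a ∈ A, exp(Q(s,a)) / ∑_{b∈A} exp(Q(s,b)) = exp(Q_e(s,a)/ν) / ∑_{b∈A} exp(Q_e(s,b)/ν). Define r(s,a) := Q(s,a) − γ·Q(T(s,a)) and r_e(s,a) := Q_e(s,a) − γ·Q_e(T(s,a)). Then there exists a function F : S → ℝ such that for all (s,a) ∈ S × A, r(s,a) = (1/ν)·r_e(s,a) + F(s) − γ·F(fst(T(s,a))), where fst(T(s,a)) denotes the state component of T(s,a). In particular, the reward recovered by minimising the behavioural-cloning and inverse-TD losses is a scaled, potential-based shaping of the expert's reward. -/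
/-- Single-task validity of the ITD minimiser: if `Q` induces the same Boltzmann
policy as the expert's `Q_e/ν` at every state, then the one-step TD reward
recovered from `Q` is a scaled, potential-based shaping of the expert's reward. -/
theorem itd_single_task {S A : Type*} [Fintype S] [Nonempty S] [Fintype A] [Nonempty A]
    (ν : ℝ) (hν : 0 < ν) (γ : ℝ)
    (Qe Q : S × A → ℝ) (T : S × A → S × A)
    (hQ : ∀ s : S, ∀ a : A,
      Real.exp (Q (s, a)) / ∑ b : A, Real.exp (Q (s, b))
        = Real.exp (Qe (s, a) / ν) / ∑ b : A, Real.exp (Qe (s, b) / ν)) :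
    ∃ F : S → ℝ, ∀ s : S, ∀ a : A,
      Q (s, a) - γ * Q (T (s, a))
        = (1 / ν) * (Qe (s, a) - γ * Qe (T (s, a))) + F s - γ * F (T (s, a)).1 := by
  set F : S → ℝ := fun s =>
    Real.log (∑ b : A, Real.exp (Q (s, b))) -
      Real.log (∑ b : A, Real.exp (Qe (s, b) / ν)) with hF
  have hpos : ∀ s : S, (0:ℝ) < ∑ b : A, Real.exp (Q (s, b)) := fun s =>
    Finset.sum_pos (fun b _ => Real.exp_pos _) Finset.univ_nonempty
  have hpos' : ∀ s : S, (0:ℝ) < ∑ b : A, Real.exp (Qe (s, b) / ν) := fun s =>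
    Finset.sum_pos (fun b _ => Real.exp_pos _) Finset.univ_nonempty
  have key : ∀ s : S, ∀ a : A, Q (s, a) = Qe (s, a) / ν + F s := by
    intro s a
    have h := hQ s a
    have h2 : Real.exp (Q (s, a)) =
        Real.exp (Qe (s, a) / ν) * ((∑ b : A, Real.exp (Q (s, b))) /
          (∑ b : A, Real.exp (Qe (s, b) / ν))) := by
      field_simp at h ⊢
      linarith [h]
    have h3 := congrArg Real.log h2
    rw [Real.log_exp, Real.log_mul (Real.exp_pos _).ne'
      (div_pos (hpos s) (hpos' s)).ne', Real.log_exp,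
      Real.log_div (hpos s).ne' (hpos' s).ne'] at h3
    simpa [hF] using h3
  refine ⟨F, fun s a => ?_⟩
  have h1 := key s a
  have h2 : Q (T (s, a)) = Qe (T (s, a)) / ν + F (T (s, a)).1 := by
    have := key (T (s, a)).1 (T (s, a)).2
    simpa using this
  rw [h1, h2]
  ring
end

section
/- Let S and A be finite nonempty types, K ∈ ℕ, ν > 0 a real number, γ ∈ ℝ, and d ∈ ℕ. For each agent k ∈ {1,…,K}, let Q^k : S × A → ℝ (the k-th expert's action-value function), T^k : S × A → S × A (the successor map along agent k's demonstrated transitions), Ψ^k : S × A → ℝ^d (successor features) and w^k ∈ ℝ^d (preferences). Let Φ : S × A → ℝ^d be shared cumulants. Suppose for every k, s, a: (i) exp(⟨Ψ^k(s,a), w^k⟩) / ∑_{b∈A} exp(⟨Ψ^k(s,b), w^k⟩) = exp(Q^k(s,a)/ν) / ∑_{b∈A} exp(Q^k(s,b)/ν), and (ii) Ψ^k(s,a) − γ·Ψ^k(T^k(s,a)) = Φ(s,a). Define r^k(s,a) := Q^k(s,a) − γ·Q^k(T^k(s,a)). Then for each k there exists a function F^k : S → ℝ such that for all (s,a) ∈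 S × A, ⟨Φ(s,a), w^k⟩ = (1/ν)·r^k(s,a) + F^k(s) − γ·F^k(fst(T^k(s,a))), where fst denotes the state component. In particular, the dot product of the learned cumulants with the k-th preference vector is a scaled, potential-based shaping of the k-th expert's reward. -/
/-! Boltzmann policies determine their logits only up to a state-dependent constant: taking logs in
hypothesis (i) gives `⟨Ψ^k(s,a), w^k⟩ = Q^k(s,a)/ν + F^k(s)`, with `F^k(s)` the difference of the two
log-partition functions at `s`. By (ii), `⟨Φ, w^k⟩` is the temporal difference of `⟨Ψ^k, w^k⟩` along
`T^k`, and the temporal difference of `Q^k/ν + F^k` is `r^k/ν` shaped by the potential `F^k`. -/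

open Finset

namespace Real

theorem log_exp_div_sum_exp {ι : Type*} [Fintype ι] [Nonempty ι] (f : ι → ℝ) (i : ι) :
    log (exp (f i) / ∑ j, exp (f j)) = f i - log (∑ j, exp (f j)) := by
  have hZ : 0 < ∑ j, exp (f j) := sum_pos (fun j _ => exp_pos _) univ_nonempty
  rw [log_div (exp_pos _).ne' hZ.ne', log_exp]

theorem eq_add_log_sum_exp_sub_of_exp_div_sum_exp_eq {ι : Type*} [Fintype ι] [Nonempty ι]
    (f g : ι → ℝ) (i : ι)
    (h : exp (f i) / ∑ j, exp (f j) = exp (g i) / ∑ j, exp (g j)) :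
    f i = g i + (log (∑ j, exp (f j)) - log (∑ j, exp (g j))) := by
  have hlog := congrArg log h
  rw [log_exp_div_sum_exp, log_exp_div_sum_exp] at hlog
  linarith

end Real

section TemporalDifference

variable {X : Type*} (γ : ℝ) (T : X → X)

def temporalDiff (f : X → ℝ) (x : X) : ℝ := f x - γ * f (T x)

theorem temporalDiff_mul_add_comp (c : ℝ) (q : X → ℝ) {Y : Type*} (p : X → Y) (F : Y → ℝ)
    (x : X) :
    temporalDiff γ T (fun y => c * q y + F (p y)) x
      = c * temporalDiff γ T q x + F (p x) - γ * F (p (T x)) := by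
  unfold temporalDiff
  ring

theorem inner_eq_temporalDiff_inner {E : Type*} [NormedAddCommGroup E] [InnerProductSpace ℝ E]
    (ψ : X → E) (φ : X → E) (w : E) (x : X) (h : ψ x - γ • ψ (T x) = φ x) :
    inner ℝ (φ x) w = temporalDiff γ T (fun y => inner ℝ (ψ y) w) x := by
  rw [← h, inner_sub_left, real_inner_smul_left, temporalDiff]

end TemporalDifference

theorem itd_multi_task_general {S A : Type*} [Fintype A] [Nonempty A]
    (K : ℕ) (ν : ℝ) (γ : ℝ) (d : ℕ)
    (Q : Fin K → S × A → ℝ) (T : Fin K → S × A → S × A)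
    (Ψ : Fin K → S × A → EuclideanSpace ℝ (Fin d))
    (w : Fin K → EuclideanSpace ℝ (Fin d))
    (Φ : S × A → EuclideanSpace ℝ (Fin d))
    (h1 : ∀ k : Fin K, ∀ s : S, ∀ a : A,
      Real.exp ((inner ℝ (Ψ k (s, a)) (w k) : ℝ))
          / ∑ b : A, Real.exp ((inner ℝ (Ψ k (s, b)) (w k) : ℝ))
        = Real.exp (Q k (s, a) / ν) / ∑ b : A, Real.exp (Q k (s, b) / ν))
    (h2 : ∀ k : Fin K, ∀ s : S, ∀ a : A,
      Ψ k (s, a) - γ • Ψ k (T k (s, a)) = Φ (s, a)) :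
    ∀ k : Fin K, ∃ F : S → ℝ, ∀ s : S, ∀ a : A,
      (inner ℝ (Φ (s, a)) (w k) : ℝ)
        = (1 / ν) * (Q k (s, a) - γ * Q k (T k (s, a)))
          + F s - γ * F (T k (s, a)).1 := by
  intro k
  let F : S → ℝ := fun s =>
    Real.log (∑ b : A, Real.exp (inner ℝ (Ψ k (s, b)) (w k)))
      - Real.log (∑ b : A, Real.exp (Q k (s, b) / ν))
  have logits : (fun x => inner ℝ (Ψ k x) (w k)) = fun x => 1 / ν * Q k x + F x.1 := by
    funext ⟨s, a⟩
    rw [Real.eq_add_log_sum_exp_sub_of_exp_div_sum_exp_eq (fun b => inner ℝ (Ψ k (s, b)) (w k))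
      (fun b => Q k (s, b) / ν) a (h1 k s a), one_div_mul_eq_div]
  refine ⟨F, fun s a => ?_⟩
  rw [inner_eq_temporalDiff_inner γ (T k) (Ψ k) Φ (w k) (s, a) (h2 k s a), logits,
    temporalDiff_mul_add_comp]
  rfl

/-- Multi-task validity of the ITD minimiser: if for each agent `k` the successor
features `Ψ k` and preferences `w k` reproduce the agent's Boltzmann policy
(`⟨Ψ^k, w^k⟩` minimises the behavioural-cloning loss) and the shared cumulants `Φ`
are TD-consistent with `Ψ k` along the demonstrated transitions, then
`⟨Φ(s,a), w^k⟩` is a scaled, potential-based shaping of the `k`-th expert's reward. -/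
theorem itd_multi_task {S A : Type*} [Fintype S] [Nonempty S] [Fintype A] [Nonempty A]
    (K : ℕ) (ν : ℝ) (hν : 0 < ν) (γ : ℝ) (d : ℕ)
    (Q : Fin K → S × A → ℝ) (T : Fin K → S × A → S × A)
    (Ψ : Fin K → S × A → EuclideanSpace ℝ (Fin d))
    (w : Fin K → EuclideanSpace ℝ (Fin d))
    (Φ : S × A → EuclideanSpace ℝ (Fin d))
    (h1 : ∀ k : Fin K, ∀ s : S, ∀ a : A,
      Real.exp ((inner ℝ (Ψ k (s, a)) (w k) : ℝ))
          / ∑ b : A, Real.exp ((inner ℝ (Ψ k (s, b)) (w k) : ℝ))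
        = Real.exp (Q k (s, a) / ν) / ∑ b : A, Real.exp (Q k (s, b) / ν))
    (h2 : ∀ k : Fin K, ∀ s : S, ∀ a : A,
      Ψ k (s, a) - γ • Ψ k (T k (s, a)) = Φ (s, a)) :
    ∀ k : Fin K, ∃ F : S → ℝ, ∀ s : S, ∀ a : A,
      (inner ℝ (Φ (s, a)) (w k) : ℝ)
        = (1 / ν) * (Q k (s, a) - γ * Q k (T k (s, a)))
          + F s - γ * F (T k (s, a)).1 :=
  itd_multi_task_general K ν γ d Q T Ψ w Φ h1 h2
end

section
/- Let S and A be finite nonempty types, γ ∈ [0,1) a real discount factor, and P : S × A → S → ℝ a transition kernel such that for every (s,a), the vector P(s,a) has nonnegative entries summing to 1. For a deterministic policy π : S → A and reward r : S × A → ℝ, let Q^{π,r} : S × A → ℝ denote the unique function satisfying the Bellman equation Q^{π,r}(s,a) = r(s,a) + γ·∑_{s'∈S} P(s,a)(s')·Q^{π,r}(s', π(s')) for all (s,a). Let d ∈ ℕ, φ : S × A → ℝ^d with ‖φ(s,a)‖₂ ≤ φ_max for all (s,a), and for a policy π let Ψ^π : S × A → ℝ^d denote the unique function satisfying Ψ^π(s,a)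 = φ(s,a) + γ·∑_{s'} P(s,a)(s')·Ψ^π(s', π(s')). Let π_j : S → A be a policy, w' ∈ ℝ^d, r' : S × A → ℝ with |⟨φ(s,a), w'⟩ − r'(s,a)| ≤ δ_r for all (s,a), and let Ψ̃ : S × A → ℝ^d satisfy ‖Ψ̃(s,a) − Ψ^{π_j}(s,a)‖₂ ≤ δ_Ψ for all (s,a). Then for every (s,a), |⟨Ψ̃(s,a), w'⟩ − Q^{π_j, r'}(s,a)| ≤ ‖w'‖₂·δ_Ψ + δ_r/(1−γ). -/
/-!
Both `⟪Ψ, w'⟫` and `Q` are Bellman fixed points of `πj`, for the rewards `⟪φ, w'⟫` and `r'`,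
so their difference is the Bellman fixed point for the reward error, which is at most `δr`.
Since the Bellman operator is a `γ`-contraction in the sup norm, evaluating at a point where
`|⟪Ψ, w'⟫ - Q|` is maximal gives `M ≤ δr + γ M`, i.e. `M ≤ δr / (1 - γ)`.
Cauchy–Schwarz bounds the remaining term `⟪Ψ̃ - Ψ, w'⟫` by `‖w'‖ δΨ`.
-/

open Finset

section Bellman

variable {X S : Type*} [Fintype S] {γ : ℝ} {P : X → S → ℝ} {σ : S → X}

lemma abs_sum_mul_le_of_stochastic {p f : S → ℝ} {M : ℝ} (hp0 : ∀ s, 0 ≤ p s)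
    (hp1 : ∑ s, p s = 1) (hf : ∀ s, |f s| ≤ M) : |∑ s, p s * f s| ≤ M :=
  calc |∑ s, p s * f s| ≤ ∑ s, |p s * f s| := abs_sum_le_sum_abs _ _
    _ ≤ ∑ s, p s * M := sum_le_sum fun s _ => by
        rw [abs_mul, abs_of_nonneg (hp0 s)]
        exact mul_le_mul_of_nonneg_left (hf s) (hp0 s)
    _ = M := by rw [← sum_mul, hp1, one_mul]

lemma inner_bellman_eq {E : Type*} [NormedAddCommGroup E] [InnerProductSpace ℝ E]
    {φ Ψ : X → E} (hΨ : ∀ x, Ψ x = φ x + γ • ∑ s, P x s • Ψ (σ s)) (w : E) (x : X) :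
    inner ℝ (Ψ x) w = inner ℝ (φ x) w + γ * ∑ s, P x s * inner ℝ (Ψ (σ s)) w := by
  simp only [hΨ x, inner_add_left, real_inner_smul_left, sum_inner]

lemma bellman_sub_eq {r₁ r₂ g₁ g₂ : X → ℝ}
    (h₁ : ∀ x, g₁ x = r₁ x + γ * ∑ s, P x s * g₁ (σ s))
    (h₂ : ∀ x, g₂ x = r₂ x + γ * ∑ s, P x s * g₂ (σ s)) (x : X) :
    g₁ x - g₂ x = (r₁ x - r₂ x) + γ * ∑ s, P x s * (g₁ (σ s) - g₂ (σ s)) := by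
  simp only [mul_sub, sum_sub_distrib]
  rw [h₁ x, h₂ x]
  ring

lemma abs_le_div_one_sub_of_bellman [Fintype X] (hγ0 : 0 ≤ γ) (hγ1 : γ < 1)
    (hP0 : ∀ x s, 0 ≤ P x s) (hP1 : ∀ x, ∑ s, P x s = 1) {e g : X → ℝ} {δ : ℝ}
    (hg : ∀ x, g x = e x + γ * ∑ s, P x s * g (σ s)) (he : ∀ x, |e x| ≤ δ) (x : X) :
    |g x| ≤ δ / (1 - γ) := by
  have hne : (univ : Finset X).Nonempty := ⟨x, mem_univ x⟩
  set M := univ.sup' hne fun y => |g y|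
  have hle : ∀ y, |g y| ≤ M := fun y => le_sup' (fun y => |g y|) (mem_univ y)
  obtain ⟨x₀, -, hx₀⟩ := exists_mem_eq_sup' hne fun y => |g y|
  have hcontract : M ≤ δ + γ * M :=
    calc M = |e x₀ + γ * ∑ s, P x₀ s * g (σ s)| := by rw [← hg]; exact hx₀
      _ ≤ |e x₀| + γ * |∑ s, P x₀ s * g (σ s)| := (abs_add_le _ _).trans_eq <| by
          rw [abs_mul, abs_of_nonneg hγ0]
      _ ≤ δ + γ * M := by
          gcongr
          exacts [he x₀, abs_sum_mul_le_of_stochastic (hP0 x₀) (hP1 x₀) fun s => hle (σ s)]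
  rw [le_div_iff₀ (sub_pos.mpr hγ1)]
  nlinarith [hle x]

end Bellman

theorem approx_value_error_bound_general {S A : Type*} [Fintype S]
    [Fintype A]
    (γ : ℝ) (hγ0 : 0 ≤ γ) (hγ1 : γ < 1)
    (P : S × A → S → ℝ)
    (hP0 : ∀ (sa : S × A) (s' : S), 0 ≤ P sa s')
    (hP1 : ∀ sa : S × A, ∑ s' : S, P sa s' = 1)
    (d : ℕ) (φ : S × A → EuclideanSpace ℝ (Fin d))
    (πj : S → A) (w' : EuclideanSpace ℝ (Fin d)) (r' : S × A → ℝ)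
    (δr δΨ : ℝ)
    (Q : S × A → ℝ)
    (hQ : ∀ sa : S × A, Q sa = r' sa + γ * ∑ s' : S, P sa s' * Q (s', πj s'))
    (Ψ : S × A → EuclideanSpace ℝ (Fin d))
    (hΨ : ∀ sa : S × A, Ψ sa = φ sa + γ • ∑ s' : S, P sa s' • Ψ (s', πj s'))
    (hr : ∀ sa : S × A, |(inner ℝ (φ sa) w' : ℝ) - r' sa| ≤ δr)
    (Ψt : S × A → EuclideanSpace ℝ (Fin d))
    (hΨt : ∀ sa : S × A, ‖Ψt sa - Ψ sa‖ ≤ δΨ) :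
    ∀ sa : S × A, |(inner ℝ (Ψt sa) w' : ℝ) - Q sa| ≤ ‖w'‖ * δΨ + δr / (1 - γ) := by
  intro sa
  have hvalue : |inner ℝ (Ψ sa) w' - Q sa| ≤ δr / (1 - γ) :=
    abs_le_div_one_sub_of_bellman hγ0 hγ1 hP0 hP1
      (bellman_sub_eq (inner_bellman_eq hΨ w') hQ) hr sa
  have hfeatures : |inner ℝ (Ψt sa - Ψ sa) w'| ≤ ‖w'‖ * δΨ :=
    calc |inner ℝ (Ψt sa - Ψ sa) w'| ≤ ‖Ψt sa - Ψ sa‖ * ‖w'‖ := abs_real_inner_le_norm _ _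
      _ ≤ ‖w'‖ * δΨ := by rw [mul_comm]; gcongr; exact hΨt sa
  calc |inner ℝ (Ψt sa) w' - Q sa|
        = |inner ℝ (Ψt sa - Ψ sa) w' + (inner ℝ (Ψ sa) w' - Q sa)| := by
        rw [inner_sub_left]; ring_nf
    _ ≤ |inner ℝ (Ψt sa - Ψ sa) w'| + |inner ℝ (Ψ sa) w' - Q sa| := abs_add_le _ _
    _ ≤ ‖w'‖ * δΨ + δr / (1 - γ) := add_le_add hfeatures hvalue

/-- Approximate-value error bound: if `Q` is the action-value of policy `πj` under
reward `r'` (Bellman fixed point), `Ψ` is the successor-features function of `πj`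
for cumulants `φ` (vector-valued Bellman fixed point), `⟨φ(s,a), w'⟩` approximates
`r'` within `δr`, and `Ψ̃` approximates `Ψ` within `δΨ`, then
`|⟨Ψ̃(s,a), w'⟩ - Q(s,a)| ≤ ‖w'‖·δΨ + δr/(1-γ)` for every `(s,a)`. -/
theorem approx_value_error_bound {S A : Type*} [Fintype S] [Nonempty S]
    [Fintype A] [Nonempty A]
    (γ : ℝ) (hγ0 : 0 ≤ γ) (hγ1 : γ < 1)
    (P : S × A → S → ℝ)
    (hP0 : ∀ (sa : S × A) (s' : S), 0 ≤ P sa s')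
    (hP1 : ∀ sa : S × A, ∑ s' : S, P sa s' = 1)
    (d : ℕ) (φ : S × A → EuclideanSpace ℝ (Fin d)) (φmax : ℝ)
    (hφ : ∀ sa : S × A, ‖φ sa‖ ≤ φmax)
    (πj : S → A) (w' : EuclideanSpace ℝ (Fin d)) (r' : S × A → ℝ)
    (δr δΨ : ℝ)
    (Q : S × A → ℝ)
    (hQ : ∀ sa : S × A, Q sa = r' sa + γ * ∑ s' : S, P sa s' * Q (s', πj s'))
    (Ψ : S × A → EuclideanSpace ℝ (Fin d))
    (hΨ : ∀ sa : S × A, Ψ sa = φ sa + γ • ∑ s' : S, P sa s' • Ψ (s', πj s'))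
    (hr : ∀ sa : S × A, |(inner ℝ (φ sa) w' : ℝ) - r' sa| ≤ δr)
    (Ψt : S × A → EuclideanSpace ℝ (Fin d))
    (hΨt : ∀ sa : S × A, ‖Ψt sa - Ψ sa‖ ≤ δΨ) :
    ∀ sa : S × A, |(inner ℝ (Ψt sa) w' : ℝ) - Q sa| ≤ ‖w'‖ * δΨ + δr / (1 - γ) :=
  approx_value_error_bound_general γ hγ0 hγ1 P hP0 hP1 d φ πj w' r' δr δΨ Q hQ Ψ hΨ hr Ψt hΨt
end

section
/- Let S and A be finite nonempty types, γ ∈ [0,1) a real discount factor, and P : S × A → S → ℝ a transition kernel such that for every (s,a), the vector P(s,a) has nonnegative entries summing to 1. For a deterministic policy π : S → A and reward r : S × A → ℝ, let Q^{π,r} : S × A → ℝ denote the unique function satisfying Q^{π,r}(s,a) = r(s,a) + γ·∑_{s'∈S} P(s,a)(s')·Q^{π,r}(s', π(s')) for all (s,a). Let d ∈ ℕ and φ : S × A → ℝ^d with ‖φ(s,a)‖₂ ≤ φ_max for all (s,a); for a policy π let Ψ^π : S × A → ℝ^d be the unique function satisfying Ψ^π(s,a) = φ(s,a) + γ·∑_{s'}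 P(s,a)(s')·Ψ^π(s', π(s')). Let K ≥ 1, and for i = 1,…,K let π_i : S → A be a policy, r_i : S × A → ℝ a reward, and w_i ∈ ℝ^d, such that each π_i is optimal for r_i (i.e., Q^{π_i, r_i}(s,a) ≥ Q^{π, r_i}(s,a) for every deterministic policy π and every (s,a)) and |⟨φ(s,a), w_i⟩ − r_i(s,a)| ≤ δ_r for all (s,a). Let r' : S × A → ℝ and w' ∈ ℝ^d satisfy |⟨φ(s,a), w'⟩ − r'(s,a)| ≤ δ_r for all (s,a), and let π* be a policy optimal for r'. Let Ψ̃^i : S × A → ℝ^d satisfy ‖Ψ̃^i(s,a) − Ψ^{π_i}(s,a)‖₂ ≤ δ_Ψ for all i and all (s,a), and let π : S → A be a generalised policy improvement (GPI) policy for {Ψ̃^i} and w', i.e., for every s ∈ S, max_{1≤i≤K} ⟨Ψ̃^i(s, π(s)), w'⟩ = max_{a∈A} max_{1≤i≤K} ⟨Ψ̃^i(s,a), w'⟩. Then for every (s,a) ∈ S × A: Q^{π*, r'}(s,a) − Q^{π, r'}(s,a) ≤ (2/(1−γ)) · [ φ_max · min_{1≤j≤K} ‖w' − w_j‖₂ +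 2·δ_r + ‖w'‖₂·δ_Ψ + δ_r/(1−γ) ]. -/
/-!
Every bound on a difference of action values comes from one contraction principle: a function
`u` on a finite set with `u ≤ c + γ · max u` is at most `c / (1 - γ)`.

Since `⟪Ψ^{πᵢ}, w'⟫` is the action value of `πᵢ` for the reward `⟪φ, w'⟫`, the learned values
`⟪Ψ̃ⁱ, w'⟫` are within `ε = ‖w'‖ δΨ + δr / (1 - γ)` of `Q^{πᵢ, r'}`, and generalised policy
improvement gives `Q^{πᵢ, r'} - Q^{π, r'} ≤ 2 ε / (1 - γ)`. For the demonstrator `j` nearest to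
`w'`, the rewards `r'` and `rⱼ` differ by at most `D = φmax ‖w' - wⱼ‖ + 2 δr`; as `πⱼ` is optimal
for `rⱼ`, no policy beats `πⱼ` on `r'` by more than `2 D / (1 - γ)`.
-/

open Finset
open scoped RealInnerProductSpace

theorem le_div_one_sub_of_le_add_mul_max {X : Type*} [Finite X] {γ c : ℝ} (hγ1 : γ < 1)
    (u : X → ℝ) (h : ∀ M, (∀ x, u x ≤ M) → ∀ x, u x ≤ c + γ * M) (x : X) :
    u x ≤ c / (1 - γ) := by
  have : Nonempty X := ⟨x⟩
  obtain ⟨x₀, hx₀⟩ := Finite.exists_max u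
  have hmax : u x₀ ≤ c + γ * u x₀ := h _ hx₀ x₀
  refine (hx₀ x).trans ?_
  rw [le_div_iff₀ (sub_pos.2 hγ1)]
  linarith

theorem sum_mul_le_of_forall_le {ι : Type*} [Fintype ι] {p g : ι → ℝ} {M : ℝ}
    (hp0 : ∀ i, 0 ≤ p i) (hp1 : ∑ i, p i = 1) (hg : ∀ i, g i ≤ M) :
    ∑ i, p i * g i ≤ M :=
  calc ∑ i, p i * g i ≤ ∑ i, p i * M :=
        sum_le_sum fun i _ => mul_le_mul_of_nonneg_left (hg i) (hp0 i)
    _ = M := by rw [← sum_mul, hp1, one_mul]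

theorem abs_inner_sub_inner_le {E : Type*} [NormedAddCommGroup E] [InnerProductSpace ℝ E]
    {x y : E} {δ : ℝ} (h : ‖x - y‖ ≤ δ) (w : E) :
    |⟪x, w⟫ - ⟪y, w⟫| ≤ ‖w‖ * δ := by
  rw [← inner_sub_left, mul_comm]
  exact (abs_real_inner_le_norm _ _).trans (by gcongr)

theorem abs_sub_le_of_inner_approx {E : Type*} [NormedAddCommGroup E] [InnerProductSpace ℝ E]
    {x w₁ w₂ : E} {a b C δ : ℝ} (hx : ‖x‖ ≤ C)
    (ha : |⟪x, w₁⟫ - a| ≤ δ) (hb : |⟪x, w₂⟫ - b| ≤ δ) :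
    |a - b| ≤ C * ‖w₁ - w₂‖ + 2 * δ := by
  have hw : |⟪x, w₁⟫ - ⟪x, w₂⟫| ≤ C * ‖w₁ - w₂‖ := by
    rw [← inner_sub_right]
    exact (abs_real_inner_le_norm _ _).trans (by gcongr)
  rw [abs_le] at ha hb hw ⊢
  constructor <;> linarith

section ActionValue

variable {S A : Type*}

def IsGreedy (q : S × A → ℝ) (π : S → A) : Prop :=
  ∀ s, q (s, π s) = ⨆ a, q (s, a)

theorem IsGreedy.le [Finite A] {q : S × A → ℝ} {π : S → A} (h : IsGreedy q π) (s : S) (a : A) :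
    q (s, a) ≤ q (s, π s) :=
  (le_ciSup (f := fun a => q (s, a)) (Set.finite_range _).bddAbove a).trans_eq (h s).symm

variable [Fintype S] {γ : ℝ} {P : S × A → S → ℝ}

/-- `f` solves the Bellman evaluation equation of `π` for the reward `r`; for `0 ≤ γ < 1` and a
stochastic `P` its solution is unique, the action-value function `Q^{π, r}`. -/
def IsActionValue (γ : ℝ) (P : S × A → S → ℝ) (π : S → A) (r f : S × A → ℝ) : Prop :=
  ∀ sa, f sa = r sa + γ * ∑ s', P sa s' * f (s', π s')

theorem IsActionValue.sub {σ τ : S → A} {r₁ r₂ f g : S × A → ℝ}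
    (hf : IsActionValue γ P σ r₁ f) (hg : IsActionValue γ P τ r₂ g) (sa : S × A) :
    f sa - g sa = r₁ sa - r₂ sa + γ * ∑ s', P sa s' * (f (s', σ s') - g (s', τ s')) := by
  rw [hf sa, hg sa]
  simp only [mul_sub, sum_sub_distrib]
  ring

theorem IsActionValue.sub_le [Finite A] (hγ0 : 0 ≤ γ) (hγ1 : γ < 1)
    (hP0 : ∀ sa s', 0 ≤ P sa s') (hP1 : ∀ sa, ∑ s', P sa s' = 1)
    {π : S → A} {r₁ r₂ f g : S × A → ℝ} {ε : ℝ}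
    (hf : IsActionValue γ P π r₁ f) (hg : IsActionValue γ P π r₂ g)
    (hr : ∀ sa, r₁ sa - r₂ sa ≤ ε) (sa : S × A) :
    f sa - g sa ≤ ε / (1 - γ) := by
  refine le_div_one_sub_of_le_add_mul_max hγ1 (fun sa => f sa - g sa) (fun M hM sa => ?_) sa
  rw [hf.sub hg sa]
  exact add_le_add (hr sa) <| mul_le_mul_of_nonneg_left
    (sum_mul_le_of_forall_le (hP0 sa) (hP1 sa) fun s' => hM _) hγ0

theorem IsActionValue.abs_sub_le [Finite A] (hγ0 : 0 ≤ γ) (hγ1 : γ < 1)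
    (hP0 : ∀ sa s', 0 ≤ P sa s') (hP1 : ∀ sa, ∑ s', P sa s' = 1)
    {π : S → A} {r₁ r₂ f g : S × A → ℝ} {ε : ℝ}
    (hf : IsActionValue γ P π r₁ f) (hg : IsActionValue γ P π r₂ g)
    (hr : ∀ sa, |r₁ sa - r₂ sa| ≤ ε) (sa : S × A) :
    |f sa - g sa| ≤ ε / (1 - γ) :=
  abs_sub_le_iff.2
    ⟨hf.sub_le hγ0 hγ1 hP0 hP1 hg (fun sa => (abs_sub_le_iff.1 (hr sa)).1) sa,
      hg.sub_le hγ0 hγ1 hP0 hP1 hf (fun sa => (abs_sub_le_iff.1 (hr sa)).2) sa⟩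

theorem sub_le_of_isOptimal_of_abs_sub_le [Finite A] (hγ0 : 0 ≤ γ) (hγ1 : γ < 1)
    (hP0 : ∀ sa s', 0 ≤ P sa s') (hP1 : ∀ sa, ∑ s', P sa s' = 1)
    {Q : (S → A) → (S × A → ℝ) → S × A → ℝ} (hQ : ∀ π r, IsActionValue γ P π r (Q π r))
    {σ π : S → A} {r r' : S × A → ℝ} {D : ℝ}
    (hopt : ∀ sa, Q σ r sa ≤ Q π r sa) (hr : ∀ sa, |r' sa - r sa| ≤ D) (sa : S × A) :
    Q σ r' sa - Q π r' sa ≤ 2 * D / (1 - γ) := by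
  have hσ := (hQ σ r').abs_sub_le hγ0 hγ1 hP0 hP1 (hQ σ r) hr sa
  have hπ := (hQ π r).abs_sub_le hγ0 hγ1 hP0 hP1 (hQ π r')
    (fun sa => abs_sub_comm (r' sa) (r sa) ▸ hr sa) sa
  rw [abs_le] at hσ hπ
  linarith [hopt sa, show 2 * D / (1 - γ) = D / (1 - γ) + D / (1 - γ) by ring]

theorem IsActionValue.inner {E : Type*} [NormedAddCommGroup E] [InnerProductSpace ℝ E]
    {π : S → A} {φ Ψ : S × A → E}
    (hΨ : ∀ sa, Ψ sa = φ sa + γ • ∑ s', P sa s' • Ψ (s', π s')) (w : E) :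
    IsActionValue γ P π (fun sa => ⟪φ sa, w⟫) (fun sa => ⟪Ψ sa, w⟫) := by
  intro sa
  dsimp only
  rw [hΨ sa, inner_add_left, real_inner_smul_left, sum_inner]
  simp only [real_inner_smul_left]

/-- Generalised policy improvement (Barreto et al.): since `π` is greedy for the approximate values,
each Bellman step loses at most `2 ε` against the best of the policies `πs`. -/
theorem IsGreedy.sub_le_of_abs_sub_le {ι : Type*} [Finite ι] [Finite A]
    (hγ0 : 0 ≤ γ) (hγ1 : γ < 1)
    (hP0 : ∀ sa s', 0 ≤ P sa s') (hP1 : ∀ sa, ∑ s', P sa s' = 1)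
    {r : S × A → ℝ} {πs : ι → S → A} {Q : ι → S × A → ℝ}
    (hQ : ∀ i, IsActionValue γ P (πs i) r (Q i))
    {π : S → A} {Qπ : S × A → ℝ} (hQπ : IsActionValue γ P π r Qπ)
    {Qt : ι → S × A → ℝ} {ε : ℝ} (hQt : ∀ i sa, |Qt i sa - Q i sa| ≤ ε)
    (hπ : IsGreedy (fun sa => ⨆ i, Qt i sa) π) (i : ι) (sa : S × A) :
    Q i sa - Qπ sa ≤ 2 * ε / (1 - γ) := by
  have hε : 0 ≤ ε := (abs_nonneg _).trans (hQt i sa)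
  have : Nonempty ι := ⟨i⟩
  refine le_div_one_sub_of_le_add_mul_max hγ1 (fun x : ι × (S × A) => Q x.1 x.2 - Qπ x.2)
    (fun M hM x => ?_) (i, sa)
  obtain ⟨i, sa⟩ := x
  have hnext : ∀ s', Q i (s', πs i s') - Qπ (s', π s') ≤ 2 * ε + M := by
    intro s'
    have hQt_le : Q i (s', πs i s') ≤ Qt i (s', πs i s') + ε := by
      linarith [(abs_le.1 (hQt i (s', πs i s'))).1]
    have hgreedy : Qt i (s', πs i s') ≤ ⨆ k, Qt k (s', π s') :=
      (le_ciSup (Set.finite_range _).bddAbove i).trans (hπ.le s' (πs i s'))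
    have hsup : ⨆ k, Qt k (s', π s') ≤ Qπ (s', π s') + (ε + M) :=
      ciSup_le fun k => by linarith [(abs_le.1 (hQt k (s', π s'))).2, hM (k, (s', π s'))]
    linarith
  calc Q i sa - Qπ sa = γ * ∑ s', P sa s' * (Q i (s', πs i s') - Qπ (s', π s')) := by
        rw [(hQ i).sub hQπ sa, sub_self, zero_add]
    _ ≤ γ * (2 * ε + M) :=
        mul_le_mul_of_nonneg_left (sum_mul_le_of_forall_le (hP0 sa) (hP1 sa) hnext) hγ0
    _ ≤ 2 * ε + γ * M := by nlinarith

end ActionValue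

theorem psiphi_generalisation_bound_general {S A : Type*} [Fintype S]
    [Fintype A]
    (γ : ℝ) (hγ0 : 0 ≤ γ) (hγ1 : γ < 1)
    (P : S × A → S → ℝ)
    (hP0 : ∀ (sa : S × A) (s' : S), 0 ≤ P sa s')
    (hP1 : ∀ sa : S × A, ∑ s' : S, P sa s' = 1)
    (d : ℕ) (φ : S × A → EuclideanSpace ℝ (Fin d)) (φmax : ℝ)
    (hφ : ∀ sa : S × A, ‖φ sa‖ ≤ φmax)
    (Q : (S → A) → (S × A → ℝ) → S × A → ℝ)
    (hQ : ∀ (π : S → A) (r : S × A → ℝ) (sa : S × A),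
      Q π r sa = r sa + γ * ∑ s' : S, P sa s' * Q π r (s', π s'))
    (Ψ : (S → A) → S × A → EuclideanSpace ℝ (Fin d))
    (hΨ : ∀ (π : S → A) (sa : S × A),
      Ψ π sa = φ sa + γ • ∑ s' : S, P sa s' • Ψ π (s', π s'))
    (K : ℕ) (hK : 1 ≤ K)
    (πs : Fin K → S → A) (rs : Fin K → S × A → ℝ)
    (ws : Fin K → EuclideanSpace ℝ (Fin d))
    (δr δΨ : ℝ)
    (hopt : ∀ (i : Fin K) (π : S → A) (sa : S × A), Q π (rs i) sa ≤ Q (πs i) (rs i) sa)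
    (hwi : ∀ (i : Fin K) (sa : S × A), |(inner ℝ (φ sa) (ws i) : ℝ) - rs i sa| ≤ δr)
    (r' : S × A → ℝ) (w' : EuclideanSpace ℝ (Fin d))
    (hw' : ∀ sa : S × A, |(inner ℝ (φ sa) w' : ℝ) - r' sa| ≤ δr)
    (πstar : S → A)
    (Ψt : Fin K → S × A → EuclideanSpace ℝ (Fin d))
    (hΨt : ∀ (i : Fin K) (sa : S × A), ‖Ψt i sa - Ψ (πs i) sa‖ ≤ δΨ)
    (π : S → A)
    (hGPI : ∀ s : S,
      (⨆ i : Fin K, (inner ℝ (Ψt i (s, π s)) w' : ℝ))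
        = ⨆ a : A, ⨆ i : Fin K, (inner ℝ (Ψt i (s, a)) w' : ℝ)) :
    ∀ sa : S × A,
      Q πstar r' sa - Q π r' sa
        ≤ (2 / (1 - γ)) *
            (φmax * (⨅ j : Fin K, ‖w' - ws j‖) + 2 * δr + ‖w'‖ * δΨ + δr / (1 - γ)) := by
  intro sa
  have : Nonempty (Fin K) := ⟨⟨0, hK⟩⟩
  obtain ⟨j, hj⟩ := exists_eq_ciInf_of_finite (f := fun j : Fin K => ‖w' - ws j‖)
  have hlearned : ∀ i sa, |⟪Ψt i sa, w'⟫ - Q (πs i) r' sa| ≤ ‖w'‖ * δΨ + δr / (1 - γ) :=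
    fun i sa => (abs_sub_le _ ⟪Ψ (πs i) sa, w'⟫ _).trans <| add_le_add
      (abs_inner_sub_inner_le (hΨt i sa) w')
      ((IsActionValue.inner (hΨ (πs i)) w').abs_sub_le hγ0 hγ1 hP0 hP1 (hQ (πs i) r') hw' sa)
  have hnearest := sub_le_of_isOptimal_of_abs_sub_le hγ0 hγ1 hP0 hP1 hQ (hopt j πstar)
    (fun sa => abs_sub_le_of_inner_approx (hφ sa) (hw' sa) (hwi j sa)) sa
  have hgpi := IsGreedy.sub_le_of_abs_sub_le hγ0 hγ1 hP0 hP1 (fun i => hQ (πs i) r') (hQ π r')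
    hlearned hGPI j sa
  rw [← hj]
  calc Q πstar r' sa - Q π r' sa
      = (Q πstar r' sa - Q (πs j) r' sa) + (Q (πs j) r' sa - Q π r' sa) := by ring
    _ ≤ 2 * (φmax * ‖w' - ws j‖ + 2 * δr) / (1 - γ)
        + 2 * (‖w'‖ * δΨ + δr / (1 - γ)) / (1 - γ) := add_le_add hnearest hgpi
    _ = _ := by ring

/-- Theorem 2 of the paper (Generalisation Bound of ΨΦ-Learning).
`Q π r` is the action-value of policy `π` under reward `r` (unique Bellman fixed
point for `γ < 1`), `Ψ π` the successor-features function of `π` for cumulants `φ`.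
Each demonstrator policy `πs i` is optimal for its reward `rs i`, which is
`δr`-approximated by `⟨φ, ws i⟩`; the ego reward `r'` is `δr`-approximated by
`⟨φ, w'⟩`; `π⋆` is optimal for `r'`; `Ψt i` approximates `Ψ (πs i)` within `δΨ`;
and `π` is a GPI policy for `{Ψt i}` and `w'`.  Then the sub-optimality of the GPI
policy on the ego task is bounded as stated. -/
theorem psiphi_generalisation_bound {S A : Type*} [Fintype S] [Nonempty S]
    [Fintype A] [Nonempty A]
    (γ : ℝ) (hγ0 : 0 ≤ γ) (hγ1 : γ < 1)
    (P : S × A → S → ℝ)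
    (hP0 : ∀ (sa : S × A) (s' : S), 0 ≤ P sa s')
    (hP1 : ∀ sa : S × A, ∑ s' : S, P sa s' = 1)
    (d : ℕ) (φ : S × A → EuclideanSpace ℝ (Fin d)) (φmax : ℝ)
    (hφ : ∀ sa : S × A, ‖φ sa‖ ≤ φmax)
    (Q : (S → A) → (S × A → ℝ) → S × A → ℝ)
    (hQ : ∀ (π : S → A) (r : S × A → ℝ) (sa : S × A),
      Q π r sa = r sa + γ * ∑ s' : S, P sa s' * Q π r (s', π s'))
    (Ψ : (S → A) → S × A → EuclideanSpace ℝ (Fin d))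
    (hΨ : ∀ (π : S → A) (sa : S × A),
      Ψ π sa = φ sa + γ • ∑ s' : S, P sa s' • Ψ π (s', π s'))
    (K : ℕ) (hK : 1 ≤ K)
    (πs : Fin K → S → A) (rs : Fin K → S × A → ℝ)
    (ws : Fin K → EuclideanSpace ℝ (Fin d))
    (δr δΨ : ℝ)
    (hopt : ∀ (i : Fin K) (π : S → A) (sa : S × A), Q π (rs i) sa ≤ Q (πs i) (rs i) sa)
    (hwi : ∀ (i : Fin K) (sa : S × A), |(inner ℝ (φ sa) (ws i) : ℝ) - rs i sa| ≤ δr)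
    (r' : S × A → ℝ) (w' : EuclideanSpace ℝ (Fin d))
    (hw' : ∀ sa : S × A, |(inner ℝ (φ sa) w' : ℝ) - r' sa| ≤ δr)
    (πstar : S → A)
    (hπstar : ∀ (π : S → A) (sa : S × A), Q π r' sa ≤ Q πstar r' sa)
    (Ψt : Fin K → S × A → EuclideanSpace ℝ (Fin d))
    (hΨt : ∀ (i : Fin K) (sa : S × A), ‖Ψt i sa - Ψ (πs i) sa‖ ≤ δΨ)
    (π : S → A)
    (hGPI : ∀ s : S,
      (⨆ i : Fin K, (inner ℝ (Ψt i (s, π s)) w' : ℝ))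
        = ⨆ a : A, ⨆ i : Fin K, (inner ℝ (Ψt i (s, a)) w' : ℝ)) :
    ∀ sa : S × A,
      Q πstar r' sa - Q π r' sa
        ≤ (2 / (1 - γ)) *
            (φmax * (⨅ j : Fin K, ‖w' - ws j‖) + 2 * δr + ‖w'‖ * δΨ + δr / (1 - γ)) :=
  psiphi_generalisation_bound_general γ hγ0 hγ1 P hP0 hP1 d φ φmax hφ Q hQ Ψ hΨ K hK πs rs ws δr δΨ
    hopt hwi r' w' hw' πstar Ψt hΨt π hGPI
end
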